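/- For positive integers n and d, the map Φ : ℝ^{n×d} × ℝᵈ → ℝᵈ defined by Φ(A, z) := the orthogonal projection of z onto the range of Aᵀ (equivalently, onto the row space of A, the linear span in ℝᵈ of the n rows of A) is Borel measurable. Consequently, if (σₜ, zₜ)_{t ∈ [0,T]} is a progressively measurable process with values in ℝ^{n×d} × ℝᵈ with respect to a filtration (𝓕ₜ), then the projected process (Φ(σₜ, zₜ))_{t ∈ [0,T]} is progressively measurable. -/

import Mathlib

/-!
Projecting onto the line `𝕜 ∙ v` is given by `w ↦ (⟪v, w⟫ / ‖v‖²) • v`, a measurable (though,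
at `v = 0`, discontinuous) function of `(v, w)`. Gram–Schmidt builds its output recursively from
such projections, so it depends measurably on the input family, and it produces an orthogonal family
with the same span. Projecting onto the span of an orthogonal family is the sum of the projections
onto its lines, hence measurable. Progressive measurability is preserved under composition with a
measurable map.
-/

open MeasureTheory InnerProductSpace Submodule TopologicalSpace

section

variable {𝕜 E ι : Type*} [RCLike 𝕜] [NormedAddCommGroup E] [InnerProductSpace 𝕜 E]

theorem OrthogonalFamily.starProjection_iSup [Fintype ι] {V : ι → Submodule 𝕜 E}
    [∀ i, CompleteSpace (V i)] [(iSup V).HasOrthogonalProjection]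
    (hV : OrthogonalFamily 𝕜 (fun i => V i) fun i => (V i).subtypeₗᵢ) (x : E) :
    (iSup V).starProjection x = ∑ i, (V i).starProjection x := by
  have hperp : ∀ i, (V i).starProjection (x - (iSup V).starProjection x) = 0 := fun i =>
    (starProjection_apply_eq_zero_iff (V i)).mpr
      (orthogonal_le (le_iSup V i) (sub_starProjection_mem_orthogonal x))
  calc (iSup V).starProjection x
      = ∑ i, (V i).starProjection ((iSup V).starProjection x) :=
        (hV.sum_projection_of_mem_iSup _ (starProjection_apply_mem _ x)).symm
    _ = ∑ i, (V i).starProjection x := by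
        refine Finset.sum_congr rfl fun i _ => (sub_eq_zero.mp ?_).symm
        rw [← map_sub, hperp i]

theorem Submodule.hasOrthogonalProjection_span_range [Finite ι] (v : ι → E) :
    (span 𝕜 (Set.range v)).HasOrthogonalProjection :=
  have := FiniteDimensional.span_of_finite 𝕜 (Set.finite_range v)
  inferInstance

-- Local only: globally it would compete with the instance path through `FiniteDimensional`.
attribute [local instance] Submodule.hasOrthogonalProjection_span_range

theorem starProjection_span_range_of_pairwise_inner_eq_zero [Fintype ι] {v : ι → E}
    (hv : Pairwise (⟪v ·, v ·⟫_𝕜 = 0)) (x : E) :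
    (span 𝕜 (Set.range v)).starProjection x = ∑ i, (𝕜 ∙ v i).starProjection x := by
  have hV : OrthogonalFamily 𝕜 (fun i => ↥(𝕜 ∙ v i)) fun i => (𝕜 ∙ v i).subtypeₗᵢ :=
    OrthogonalFamily.of_pairwise fun i j hij => by
      simp only [Function.onFun, isOrtho_span, Set.mem_singleton_iff]
      rintro _ rfl _ rfl
      exact hv hij
  simp_rw [span_range_eq_iSup]
  exact hV.starProjection_iSup x

theorem starProjection_span_range_eq_sum_gramSchmidt [LinearOrder ι] [LocallyFiniteOrderBot ι]
    [WellFoundedLT ι] [Fintype ι] (f : ι → E) (x : E) :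
    (span 𝕜 (Set.range f)).starProjection x =
      ∑ i, (𝕜 ∙ gramSchmidt 𝕜 f i).starProjection x := by
  rw [← starProjection_span_range_of_pairwise_inner_eq_zero (gramSchmidt_pairwise_orthogonal 𝕜 f)]
  congr! 2
  exact (span_gramSchmidt 𝕜 f).symm

variable [MeasurableSpace E] [BorelSpace E] [SecondCountableTopology E]

theorem Measurable.starProjection_span_singleton {α : Type*} [MeasurableSpace α] {v w : α → E}
    (hv : Measurable v) (hw : Measurable w) :
    Measurable fun a => (𝕜 ∙ v a).starProjection (w a) := by
  simp_rw [starProjection_singleton]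
  fun_prop

theorem measurable_gramSchmidt [LinearOrder ι] [LocallyFiniteOrderBot ι] [WellFoundedLT ι]
    (i : ι) : Measurable fun f : ι → E => gramSchmidt 𝕜 f i := by
  induction i using WellFoundedLT.induction with
  | _ i ih =>
    simp_rw [gramSchmidt_def 𝕜 _ i]
    exact (measurable_pi_apply i).sub <| Finset.measurable_sum _ fun j hj =>
      (ih j (Finset.mem_Iio.mp hj)).starProjection_span_singleton (measurable_pi_apply i)

theorem measurable_starProjection_span_range [LinearOrder ι] [LocallyFiniteOrderBot ι]
    [WellFoundedLT ι] [Fintype ι] :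
    Measurable fun p : (ι → E) × E => (span 𝕜 (Set.range p.1)).starProjection p.2 := by
  simp_rw [starProjection_span_range_eq_sum_gramSchmidt (𝕜 := 𝕜)]
  exact Finset.measurable_sum _ fun i _ =>
    ((measurable_gramSchmidt i).comp measurable_fst).starProjection_span_singleton measurable_snd

end

theorem IsStronglyProgressive.measurable_comp {Ω ι β γ : Type*} {m : MeasurableSpace Ω}
    [Preorder ι] [MeasurableSpace ι] {f : Filtration ι m} {u : ι → Ω → β}
    [TopologicalSpace β] [MeasurableSpace β] [BorelSpace β] [PseudoMetrizableSpace β]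
    [TopologicalSpace γ] [MeasurableSpace γ] [OpensMeasurableSpace γ] [PseudoMetrizableSpace γ]
    [SecondCountableTopology γ] {g : β → γ} (hg : Measurable g) (hu : IsStronglyProgressive f u) :
    IsStronglyProgressive f fun i ω => g (u i ω) := fun i =>
  (hg.comp (hu i).measurable).stronglyMeasurable

/-- Borel measurability of the map sending a matrix (given by its rows)
and a vector to the orthogonal projection of the vector onto the row space, and the
resulting preservation of progressive measurability. Here a matrix `A ∈ ℝ^{n×d}` is
encoded by its rows `A : Fin n → EuclideanSpace ℝ (Fin d)`, and the row space is the
span of the rows, i.e. the range of `Aᵀ`. -/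
theorem stmt_12 (n d : ℕ)
    (Φ : (Fin n → EuclideanSpace ℝ (Fin d)) → EuclideanSpace ℝ (Fin d) →
      EuclideanSpace ℝ (Fin d))
    (hΦ : ∀ A z, Φ A z =
      ↑(Submodule.orthogonalProjectionOnto (Submodule.span ℝ (Set.range A)) z)) :
    Measurable (fun p : (Fin n → EuclideanSpace ℝ (Fin d)) × EuclideanSpace ℝ (Fin d) =>
      Φ p.1 p.2) ∧
    ∀ {Ω : Type} {m : MeasurableSpace Ω} (T : ℝ)
      (𝓕 : Filtration (Set.Icc (0 : ℝ) T) m)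
      (σ : Set.Icc (0 : ℝ) T → Ω → (Fin n → EuclideanSpace ℝ (Fin d)))
      (z : Set.Icc (0 : ℝ) T → Ω → EuclideanSpace ℝ (Fin d)),
      ProgMeasurable 𝓕 (fun t ω => (σ t ω, z t ω)) →
      ProgMeasurable 𝓕 (fun t ω => Φ (σ t ω) (z t ω)) := by
  have hΦ_eq : (fun p : (Fin n → EuclideanSpace ℝ (Fin d)) × EuclideanSpace ℝ (Fin d) =>
      Φ p.1 p.2) = fun p => (span ℝ (Set.range p.1)).starProjection p.2 :=
    funext fun p => by rw [hΦ, starProjection_apply]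
  have hΦ_meas : Measurable fun p : (Fin n → EuclideanSpace ℝ (Fin d)) ×
      EuclideanSpace ℝ (Fin d) => Φ p.1 p.2 :=
    hΦ_eq ▸ measurable_starProjection_span_range
  exact ⟨hΦ_meas, fun T 𝓕 σ z h => IsStronglyProgressive.measurable_comp hΦ_meas h⟩
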